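/- Let p : X → Y be a branched covering, and let U be a portly subset of Y. Then p⁻¹(U) is portly in X (in particular connected) and the restriction p : p⁻¹(U) → U is a branched covering. -/

import Mathlib

/-- A subset `U` of a topological space `X` is *portly* if it is open, dense, and
locally connected in `X`. -/
def Portly (X : Type*) [TopologicalSpace X] (U : Set X) : Prop :=
  IsOpen U ∧ Dense U ∧ ∀ W : Set X, IsOpen W → IsConnected W → IsConnected (W ∩ U)

/-- `V` is a connected component of `S`. -/
def IsComponentOf {X : Type*} [TopologicalSpace X] (V S : Set X) : Prop :=
  ∃ x ∈ S, V = connectedComponentIn S x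

/-- A *spread* is a continuous map such that the connected components of preimages of
open subsets of the base form a basis for the topology of the total space. -/
def IsSpread {X Y : Type*} [TopologicalSpace X] [TopologicalSpace Y] (p : X → Y) : Prop :=
  Continuous p ∧ TopologicalSpace.IsTopologicalBasis
    {V : Set X | ∃ U : Set Y, IsOpen U ∧ IsComponentOf V (p ⁻¹' U)}

/-- `p` maps `V` homeomorphically onto `U`. -/
def MapsHomeomorphicallyOnto {X Y : Type*} [TopologicalSpace X] [TopologicalSpace Y]
    (p : X → Y) (V : Set X) (U : Set Y) : Prop :=
  ∃ h : V ≃ₜ U, ∀ v : V, (h v : Y) = p v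

/-- The ordinary locus in the base of a spread: points admitting an open neighborhood
evenly covered by `p`. -/
def OrdBase {X Y : Type*} [TopologicalSpace X] [TopologicalSpace Y] (p : X → Y) : Set Y :=
  {y | ∃ U : Set Y, IsOpen U ∧ y ∈ U ∧
    ∀ V : Set X, IsComponentOf V (p ⁻¹' U) → MapsHomeomorphicallyOnto p V U}

/-- The ordinary locus in the total space of a spread. -/
def OrdTotal {X Y : Type*} [TopologicalSpace X] [TopologicalSpace Y] (p : X → Y) : Set X :=
  p ⁻¹' OrdBase p

/-- A *complete* spread: every monotone choice of connected components of preimages of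
connected open neighborhoods of a point of the closure of the image has nonempty
intersection. -/
def IsCompleteSpread {X Y : Type*} [TopologicalSpace X] [TopologicalSpace Y]
    (p : X → Y) : Prop :=
  IsSpread p ∧ ∀ y ∈ closure (Set.range p),
    ∀ χ : {U : Set Y // IsOpen U ∧ IsConnected U ∧ y ∈ U} → Set X,
      (∀ U, IsComponentOf (χ U) (p ⁻¹' U.1)) →
      (∀ U V, U.1 ⊆ V.1 → χ U ⊆ χ V) →
      (⋂ U, χ U).Nonempty

/-- A *branched covering* is a complete surjective spread between connected spaces whose
ordinary loci are portly. -/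
def IsBranchedCovering {X Y : Type*} [TopologicalSpace X] [TopologicalSpace Y]
    (p : X → Y) : Prop :=
  IsCompleteSpread p ∧ Function.Surjective p ∧ ConnectedSpace X ∧ ConnectedSpace Y ∧
    Portly X (OrdTotal p) ∧ Portly Y (OrdBase p)

/-!
Over a small connected open set `W` around an ordinary value, the components of `p⁻¹ W` are
copies of `W`, so they meet `p⁻¹ U` in a connected set when `U` is portly. Chaining such
sheets along the connected ordinary part of a component of the preimage of an open set, which is
dense there, shows that `p⁻¹ U` meets every such component, and hence every connected open set,
in a connected set. Everything else transfers to the restriction because components of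
preimages of subsets of `U` are the same in `p⁻¹ U` as in `X`, and connected open
neighbourhoods inside `U` are cofinal since `Y` is locally connected.
-/

open Set Topology Filter Relation

section General
variable {X Y : Type*} [TopologicalSpace X] [TopologicalSpace Y]

theorem Topology.IsEmbedding.image_connectedComponentIn {f : X → Y} (hf : IsEmbedding f)
    {s : Set X} {x : X} (hx : x ∈ s) :
    f '' connectedComponentIn s x = connectedComponentIn (f '' s) (f x) := by
  refine (hf.continuous.continuousOn.image_connectedComponentIn_subset hx).antisymm ?_
  have hrange : connectedComponentIn (f '' s) (f x) ⊆ range f :=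
    (connectedComponentIn_subset _ _).trans (image_subset_range _ _)
  rw [← image_preimage_eq_of_subset hrange]
  refine image_mono (IsPreconnected.subset_connectedComponentIn ?_
    (mem_connectedComponentIn (mem_image_of_mem f hx)) ?_)
  · rw [← hf.isInducing.isPreconnected_image, image_preimage_eq_of_subset hrange]
    exact isPreconnected_connectedComponentIn
  · exact fun y hy => hf.injective.mem_set_image.mp (connectedComponentIn_subset _ _ hy)

theorem connectedComponentIn_preimage_val {Z F : Set X} (hFZ : F ⊆ Z) {z : Z}
    (hz : (z : X) ∈ F) :
    connectedComponentIn (Subtype.val ⁻¹' F) z = Subtype.val ⁻¹' connectedComponentIn F z := by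
  have := IsEmbedding.subtypeVal.image_connectedComponentIn (s := Subtype.val ⁻¹' F) hz
  rw [image_preimage_eq_of_subset (by rwa [Subtype.range_coe])] at this
  rw [← this, preimage_image_eq _ Subtype.val_injective]

theorem IsComponentOf.image_val {Z F : Set X} (hFZ : F ⊆ Z) {V : Set Z}
    (hV : IsComponentOf V (Subtype.val ⁻¹' F)) : IsComponentOf (Subtype.val '' V) F := by
  obtain ⟨z, hz, rfl⟩ := hV
  refine ⟨z, hz, ?_⟩
  rw [connectedComponentIn_preimage_val hFZ hz, image_preimage_eq_of_subset
    (by rw [Subtype.range_coe]; exact (connectedComponentIn_subset _ _).trans hFZ)]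

theorem IsComponentOf.subset {V S : Set X} (h : IsComponentOf V S) : V ⊆ S := by
  obtain ⟨x, -, rfl⟩ := h
  exact connectedComponentIn_subset S x

theorem IsComponentOf.isConnected {V S : Set X} (h : IsComponentOf V S) : IsConnected V := by
  obtain ⟨x, hx, rfl⟩ := h
  exact isConnected_connectedComponentIn_iff.mpr hx

theorem IsComponentOf.eq_connectedComponentIn {V S : Set X} (h : IsComponentOf V S) {x : X}
    (hx : x ∈ V) : V = connectedComponentIn S x := by
  obtain ⟨z, -, rfl⟩ := h
  exact connectedComponentIn_eq hx

theorem IsConnected.of_inter_dense {A D : Set X} (h : IsConnected (A ∩ D)) (hA : IsOpen A)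
    (hD : Dense D) : IsConnected A :=
  h.subset_closure inter_subset_left (hD.open_subset_closure_inter hA)

theorem IsPreconnected.reflTransGen_of_isOpen {ι : Type*} {W : Set X} (hW : IsPreconnected W)
    {s : ι → Set X} (hs : ∀ i, IsOpen (s i)) (hcover : W ⊆ ⋃ i, s i) {R : ι → ι → Prop}
    (hR : ∀ i j, (W ∩ s i ∩ s j).Nonempty → R i j) {i j : ι} (hi : (W ∩ s i).Nonempty)
    (hj : (W ∩ s j).Nonempty) : ReflTransGen R i j := by
  obtain ⟨x, hxW, hxi⟩ := hi
  obtain ⟨y, hyW, hyj⟩ := hj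
  refine hW.induction₂' (fun x y => ∀ i j, x ∈ s i → y ∈ s j → ReflTransGen R i j)
    (fun x hx => ?_) (fun x y z _ hy _ hxy hyz i k hxi hzk => ?_) hxW hyW i j hxi hyj
  · obtain ⟨k, hxk⟩ := mem_iUnion.mp (hcover hx)
    filter_upwards [inter_mem_nhdsWithin W ((hs k).mem_nhds hxk)] with y ⟨hyW, hyk⟩
    exact ⟨fun i j hxi hyj =>
        .tail (.single (hR i k ⟨x, ⟨hx, hxi⟩, hxk⟩)) (hR k j ⟨y, ⟨hyW, hyk⟩, hyj⟩),
      fun i j hyi hxj =>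
        .tail (.single (hR i k ⟨y, ⟨hyW, hyi⟩, hyk⟩)) (hR k j ⟨x, ⟨hx, hxk⟩, hxj⟩)⟩
  · obtain ⟨j, hyj⟩ := mem_iUnion.mp (hcover hy)
    exact (hxy i j hxi hyj).trans (hyz j k hyj hzk)

theorem IsConnected.inter_of_forall_nhds {W S : Set X} (hW : IsConnected W) (hWo : IsOpen W)
    (H : ∀ x ∈ W, ∀ O ∈ 𝓝 x, ∃ N ⊆ O, IsOpen N ∧ x ∈ N ∧ IsConnected (N ∩ S)) :
    IsConnected (W ∩ S) := by
  let ι := {N : Set X // IsOpen N ∧ N ⊆ W ∧ IsConnected (N ∩ S)}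
  have small : ∀ x ∈ W, ∀ O ∈ 𝓝 x, ∃ i : ι, x ∈ i.1 ∧ i.1 ⊆ O := fun x hx O hO => by
    obtain ⟨N, hNO, hNo, hxN, hNS⟩ := H x hx (O ∩ W) (inter_mem hO (hWo.mem_nhds hx))
    exact ⟨⟨N, hNo, fun _ h => (hNO h).2, hNS⟩, hxN, fun _ h => (hNO h).1⟩
  have hcover : W ⊆ ⋃ i : ι, i.1 := fun x hx =>
    let ⟨i, hxi, _⟩ := small x hx univ univ_mem
    mem_iUnion.mpr ⟨i, hxi⟩
  have linked (i j : ι) : (W ∩ i.1 ∩ j.1).Nonempty → (i.1 ∩ S ∩ (j.1 ∩ S)).Nonempty := by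
    rintro ⟨x, ⟨hxW, hxi⟩, hxj⟩
    obtain ⟨k, -, hk⟩ := small x hxW _ (inter_mem (i.2.1.mem_nhds hxi) (j.2.1.mem_nhds hxj))
    obtain ⟨y, hyk, hyS⟩ := k.2.2.2.nonempty
    exact ⟨y, ⟨(hk hyk).1, hyS⟩, (hk hyk).2, hyS⟩
  have hWS : W ∩ S = ⋃ i : ι, i.1 ∩ S := by
    refine subset_antisymm (fun x ⟨hxW, hxS⟩ => ?_)
      (iUnion_subset fun i => inter_subset_inter_left S i.2.2.1)
    obtain ⟨i, hxi⟩ := mem_iUnion.mp (hcover hxW)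
    exact mem_iUnion.mpr ⟨i, hxi, hxS⟩
  have : Nonempty ι := let ⟨x, hx⟩ := hW.nonempty; ⟨(small x hx univ univ_mem).choose⟩
  rw [hWS]
  refine IsConnected.iUnion_of_reflTransGen (fun i => i.2.2.2) fun i j => ?_
  have hmeetW (i : ι) : (W ∩ i.1).Nonempty :=
    let ⟨x, hx, _⟩ := i.2.2.2.nonempty
    ⟨x, i.2.2.1 hx, hx⟩
  exact hW.isPreconnected.reflTransGen_of_isOpen (fun i => i.2.1) hcover linked
    (hmeetW i) (hmeetW j)

end General

section Portly
variable {X : Type*} [TopologicalSpace X]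

theorem Portly.mono {P S : Set X} (hP : Portly X P) (hS : IsOpen S) (hPS : P ⊆ S) :
    Portly X S := by
  refine ⟨hS, hP.2.1.mono hPS, fun W hWo hWc => ?_⟩
  refine IsConnected.of_inter_dense ?_ (hWo.inter hS) hP.2.1
  rw [inter_assoc, inter_eq_right.mpr hPS]
  exact hP.2.2 W hWo hWc

theorem Portly.preimage_val {P Z : Set X} (hP : Portly X P) (hZ : IsOpen Z) :
    Portly Z (Subtype.val ⁻¹' P) := by
  refine ⟨hP.1.preimage continuous_subtype_val, hP.2.1.preimage hZ.isOpenMap_subtype_val,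
    fun W hWo hWc => ?_⟩
  have h := hP.2.2 _ (hZ.isOpenMap_subtype_val W hWo)
    (hWc.image _ continuous_subtype_val.continuousOn)
  rw [← image_inter_preimage] at h
  exact ⟨h.nonempty.of_image, IsInducing.subtypeVal.isPreconnected_image.mp h.2⟩

theorem Portly.connectedSpace [ConnectedSpace X] {P : Set X} (hP : Portly X P) :
    ConnectedSpace P :=
  Subtype.connectedSpace (by simpa using hP.2.2 univ isOpen_univ isConnected_univ)

end Portly

section Sheets
variable {X Y : Type*} [TopologicalSpace X] [TopologicalSpace Y] {p : X → Y} {V : Set X}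
  {U : Set Y}

theorem mapsHomeomorphicallyOnto_iff :
    MapsHomeomorphicallyOnto p V U ↔ IsEmbedding (V.domRestrict p) ∧ p '' V = U := by
  constructor
  · rintro ⟨h, hh⟩
    have hcomp : V.domRestrict p = Subtype.val ∘ h := funext fun v => (hh v).symm
    refine ⟨hcomp ▸ IsEmbedding.subtypeVal.comp h.isEmbedding, ?_⟩
    rw [← range_domRestrict, hcomp, range_comp, h.range_coe, image_univ, Subtype.range_coe]
  · rintro ⟨he, rfl⟩
    exact ⟨he.toHomeomorph.trans (Homeomorph.setCongr (range_domRestrict p V)), fun v => rfl⟩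

namespace MapsHomeomorphicallyOnto

theorem image_eq (h : MapsHomeomorphicallyOnto p V U) : p '' V = U :=
  (mapsHomeomorphicallyOnto_iff.mp h).2

theorem subset_preimage (h : MapsHomeomorphicallyOnto p V U) : V ⊆ p ⁻¹' U :=
  h.image_eq ▸ subset_preimage_image p V

theorem inter_preimage (h : MapsHomeomorphicallyOnto p V U) {W : Set Y} (hW : W ⊆ U) :
    MapsHomeomorphicallyOnto p (V ∩ p ⁻¹' W) W := by
  obtain ⟨he, rfl⟩ := mapsHomeomorphicallyOnto_iff.mp h
  exact mapsHomeomorphicallyOnto_iff.mpr ⟨he.comp (IsEmbedding.inclusion inter_subset_left),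
    by rw [image_inter_preimage, inter_eq_right.mpr hW]⟩

theorem isConnected (h : MapsHomeomorphicallyOnto p V U) (hU : IsConnected U) :
    IsConnected V := by
  obtain ⟨h, -⟩ := h
  rw [isConnected_iff_connectedSpace] at hU ⊢
  exact h.symm.surjective.connectedSpace h.symm.continuous

theorem isConnected_inter_preimage (h : MapsHomeomorphicallyOnto p V U) {T : Set Y}
    (hT : IsConnected (U ∩ T)) : IsConnected (V ∩ p ⁻¹' T) := by
  have := (h.inter_preimage inter_subset_left).isConnected hT
  rwa [preimage_inter, ← inter_assoc, inter_eq_left.mpr h.subset_preimage] at this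

theorem nonempty_inter_preimage (h : MapsHomeomorphicallyOnto p V U) {T : Set Y}
    (hT : (U ∩ T).Nonempty) : (V ∩ p ⁻¹' T).Nonempty := by
  rw [← h.image_eq, ← image_inter_preimage] at hT
  exact hT.of_image

theorem restrictPreimage (h : MapsHomeomorphicallyOnto p V U) (S : Set Y) :
    MapsHomeomorphicallyOnto (S.restrictPreimage p) (Subtype.val ⁻¹' V)
      (Subtype.val ⁻¹' U) := by
  obtain ⟨he, rfl⟩ := mapsHomeomorphicallyOnto_iff.mp h
  refine mapsHomeomorphicallyOnto_iff.mpr ⟨?_, image_restrictPreimage _ _ _⟩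
  have hval : IsEmbedding fun v : (Subtype.val ⁻¹' V : Set (p ⁻¹' S)) => (⟨v.1.1, v.2⟩ : V) :=
    IsEmbedding.subtypeVal.of_comp_iff.mp (IsEmbedding.subtypeVal.comp IsEmbedding.subtypeVal :
      IsEmbedding fun v : (Subtype.val ⁻¹' V : Set (p ⁻¹' S)) => v.1.1)
  exact IsEmbedding.subtypeVal.of_comp_iff.mp (he.comp hval)

end MapsHomeomorphicallyOnto

end Sheets

section Spread
variable {X Y : Type*} [TopologicalSpace X] [TopologicalSpace Y] {p : X → Y}

def EvenlyCovered (p : X → Y) (U : Set Y) : Prop :=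
  IsOpen U ∧ ∀ V : Set X, IsComponentOf V (p ⁻¹' U) → MapsHomeomorphicallyOnto p V U

theorem mem_ordBase_iff {y : Y} : y ∈ OrdBase p ↔ ∃ U, EvenlyCovered p U ∧ y ∈ U :=
  ⟨fun ⟨U, hUo, hyU, hU⟩ => ⟨U, ⟨hUo, hU⟩, hyU⟩, fun ⟨U, ⟨hUo, hU⟩, hyU⟩ => ⟨U, hUo, hyU, hU⟩⟩

theorem EvenlyCovered.subset_ordBase {U : Set Y} (h : EvenlyCovered p U) : U ⊆ OrdBase p :=
  fun _ hy => mem_ordBase_iff.mpr ⟨U, h, hy⟩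

theorem isOpen_ordBase (p : X → Y) : IsOpen (OrdBase p) :=
  isOpen_iff_forall_mem_open.mpr fun _ hy =>
    let ⟨U, hU, hyU⟩ := mem_ordBase_iff.mp hy
    ⟨U, hU.subset_ordBase, hU.1, hyU⟩

theorem EvenlyCovered.mono {U W : Set Y} (h : EvenlyCovered p U) (hWo : IsOpen W)
    (hWc : IsConnected W) (hWU : W ⊆ U) : EvenlyCovered p W := by
  refine ⟨hWo, ?_⟩
  rintro _ ⟨x, hx, rfl⟩
  have hC := (h.2 _ ⟨x, hWU hx, rfl⟩).inter_preimage hWU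
  suffices connectedComponentIn (p ⁻¹' W) x = connectedComponentIn (p ⁻¹' U) x ∩ p ⁻¹' W by
    rwa [this]
  refine subset_antisymm (subset_inter (connectedComponentIn_mono x (preimage_mono hWU))
    (connectedComponentIn_subset _ _)) ?_
  exact (hC.isConnected hWc).isPreconnected.subset_connectedComponentIn
    ⟨mem_connectedComponentIn (hWU hx), hx⟩ inter_subset_right

theorem IsSpread.exists_evenlyCovered [LocallyConnectedSpace Y] (hp : IsSpread p) {x : X}
    (hx : x ∈ OrdTotal p) {O : Set X} (hO : O ∈ 𝓝 x) :
    ∃ W, EvenlyCovered p W ∧ IsConnected W ∧ p x ∈ W ∧ connectedComponentIn (p ⁻¹' W) x ⊆ O := by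
  obtain ⟨U, hU, hpxU⟩ := mem_ordBase_iff.mp hx
  obtain ⟨V, ⟨W', hW'o, hV⟩, hxV, hVO⟩ := hp.2.mem_nhds_iff.mp hO
  obtain rfl := hV.eq_connectedComponentIn hxV
  have hpxW' : p x ∈ W' := connectedComponentIn_subset (p ⁻¹' W') x hxV
  obtain ⟨W, ⟨hWo, hpxW, hWc⟩, hW⟩ := (LocallyConnectedSpace.open_connected_basis (p x)).mem_iff.mp
    (inter_mem (hW'o.mem_nhds hpxW') (hU.1.mem_nhds hpxU))
  refine ⟨W, hU.mono hWo hWc fun y hy => (hW hy).2, hWc, hpxW, ?_⟩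
  exact (connectedComponentIn_mono x (preimage_mono fun y hy => (hW hy).1)).trans hVO

theorem IsSpread.dense_preimage [LocallyConnectedSpace Y] (hp : IsSpread p)
    (hOrd : Dense (OrdTotal p)) {U : Set Y} (hU : Dense U) : Dense (p ⁻¹' U) := by
  refine dense_iff_inter_open.mpr fun O hO hOne => ?_
  obtain ⟨x, hxO, hx⟩ := hOrd.inter_open_nonempty O hO hOne
  obtain ⟨W, hW, -, hpxW, hWO⟩ := hp.exists_evenlyCovered hx (hO.mem_nhds hxO)
  obtain ⟨z, hzN, hzU⟩ := (hW.2 _ ⟨x, hpxW, rfl⟩).nonempty_inter_preimage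
    (hU.inter_open_nonempty W hW.1 ⟨p x, hpxW⟩)
  exact ⟨z, hWO hzN, hzU⟩

theorem IsSpread.isConnected_inter_preimage [LocallyConnectedSpace Y] (hp : IsSpread p)
    (hOrd : Portly X (OrdTotal p)) {U : Set Y} (hU : Portly Y U) {W : Set Y} (hW : IsOpen W)
    {V : Set X} (hV : IsComponentOf V (p ⁻¹' W)) : IsConnected (V ∩ p ⁻¹' U) := by
  have hVo : IsOpen V := hp.2.isOpen ⟨W, hW, hV⟩
  refine IsConnected.of_inter_dense ?_ (hVo.inter (hU.1.preimage hp.1)) hOrd.2.1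
  rw [inter_right_comm]
  refine (hOrd.2.2 V hVo hV.isConnected).inter_of_forall_nhds (hVo.inter hOrd.1)
    fun x hx O hO => ?_
  obtain ⟨W₁, hW₁, hW₁c, hpxW₁, hW₁O⟩ := hp.exists_evenlyCovered hx.2 hO
  exact ⟨_, hW₁O, hp.2.isOpen ⟨W₁, hW₁.1, x, hpxW₁, rfl⟩, mem_connectedComponentIn hpxW₁,
    (hW₁.2 _ ⟨x, hpxW₁, rfl⟩).isConnected_inter_preimage (hU.2.2 W₁ hW₁.1 hW₁c)⟩

theorem IsSpread.portly_preimage [LocallyConnectedSpace Y] (hp : IsSpread p)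
    (hOrd : Portly X (OrdTotal p)) {U : Set Y} (hU : Portly Y U) : Portly X (p ⁻¹' U) := by
  refine ⟨hU.1.preimage hp.1, hp.dense_preimage hOrd.2.1 hU.2.1,
    fun W hWo hWc => hWc.inter_of_forall_nhds hWo fun x _ O hO => ?_⟩
  obtain ⟨V, ⟨W', hW'o, hV⟩, hxV, hVO⟩ := hp.2.mem_nhds_iff.mp hO
  exact ⟨V, hVO, hp.2.isOpen ⟨W', hW'o, hV⟩, hxV, hp.isConnected_inter_preimage hOrd hU hW'o hV⟩

end Spread

section Restriction
variable {X Y : Type*} [TopologicalSpace X] {p : X → Y} {U : Set Y}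

theorem IsComponentOf.image_val_restrictPreimage {V : Set (p ⁻¹' U)} {W : Set U}
    (hV : IsComponentOf V (U.restrictPreimage p ⁻¹' W)) :
    IsComponentOf (Subtype.val '' V) (p ⁻¹' (Subtype.val '' W)) := by
  rw [preimage_restrictPreimage] at hV
  exact hV.image_val (preimage_mono (Subtype.coe_image_subset U W))

variable [TopologicalSpace Y]

theorem IsSpread.restrictPreimage (hp : IsSpread p) (hU : IsOpen U) :
    IsSpread (U.restrictPreimage p) := by
  refine ⟨hp.1.restrictPreimage,
    TopologicalSpace.isTopologicalBasis_of_isOpen_of_nhds ?_ fun a O haO hO => ?_⟩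
  · rintro V ⟨W, hWo, hV⟩
    rw [← preimage_image_eq V Subtype.val_injective]
    exact (hp.2.isOpen ⟨_, hU.isOpenMap_subtype_val W hWo, hV.image_val_restrictPreimage⟩).preimage
      continuous_subtype_val
  obtain ⟨V, ⟨W, hWo, hV⟩, haV, hVO⟩ := hp.2.mem_nhds_iff.mp
    (((hU.preimage hp.1).isOpenMap_subtype_val O hO).mem_nhds (mem_image_of_mem _ haO))
  obtain rfl := hV.eq_connectedComponentIn haV
  have hpa : p a ∈ W := connectedComponentIn_subset (p ⁻¹' W) a haV
  refine ⟨connectedComponentIn (U.restrictPreimage p ⁻¹' (Subtype.val ⁻¹' W)) a,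
    ⟨Subtype.val ⁻¹' W, hWo.preimage continuous_subtype_val, a, hpa, rfl⟩,
    mem_connectedComponentIn hpa, fun b hb => Subtype.val_injective.mem_set_image.mp (hVO ?_)⟩
  exact connectedComponentIn_mono _ (image_subset_iff.mpr fun c hc => hc)
    (continuous_subtype_val.continuousOn.image_connectedComponentIn_subset hpa
      (mem_image_of_mem _ hb))

theorem EvenlyCovered.restrictPreimage {W : Set Y} (h : EvenlyCovered p W) (hWU : W ⊆ U) :
    EvenlyCovered (U.restrictPreimage p) (Subtype.val ⁻¹' W) := by
  refine ⟨h.1.preimage continuous_subtype_val, fun V hV => ?_⟩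
  have hV' := hV.image_val_restrictPreimage
  rw [Subtype.image_preimage_coe, inter_eq_right.mpr hWU] at hV'
  simpa only [preimage_image_eq V Subtype.val_injective] using (h.2 _ hV').restrictPreimage U

theorem preimage_val_ordBase_subset [LocallyConnectedSpace Y] (hU : IsOpen U) :
    Subtype.val ⁻¹' OrdBase p ⊆ OrdBase (U.restrictPreimage p) := by
  intro y hy
  obtain ⟨W, hW, hyW⟩ := mem_ordBase_iff.mp hy
  have hyWU : (y : Y) ∈ W ∩ U := ⟨hyW, y.2⟩
  have hsub : connectedComponentIn (W ∩ U) y ⊆ W ∩ U := connectedComponentIn_subset _ _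
  have hW' := hW.mono (hW.1.inter hU).connectedComponentIn
    (isConnected_connectedComponentIn_iff.mpr hyWU) (hsub.trans inter_subset_left)
  exact (hW'.restrictPreimage (hsub.trans inter_subset_right)).subset_ordBase
    (mem_connectedComponentIn hyWU)

end Restriction

section Completeness
variable {X Y : Type*} [TopologicalSpace X] [TopologicalSpace Y] [LocallyConnectedSpace Y]
  {p : X → Y} {U : Set Y}

theorem exists_monotone_components_of_restrictPreimage (hU : IsOpen U) {y : U}
    {χ' : {W : Set U // IsOpen W ∧ IsConnected W ∧ y ∈ W} → Set (p ⁻¹' U)}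
    (hχ' : ∀ W, IsComponentOf (χ' W) (U.restrictPreimage p ⁻¹' W.1))
    (hmono : ∀ W₁ W₂, W₁.1 ⊆ W₂.1 → χ' W₁ ⊆ χ' W₂) :
    ∃ χ : {W : Set Y // IsOpen W ∧ IsConnected W ∧ (y : Y) ∈ W} → Set X,
      (∀ W, IsComponentOf (χ W) (p ⁻¹' W.1)) ∧ (∀ W₁ W₂, W₁.1 ⊆ W₂.1 → χ W₁ ⊆ χ W₂) ∧
      ∀ W', ∃ W, χ W = Subtype.val '' χ' W' := by
  -- `c` traces a connected neighbourhood of `y` in `Y` on `U`, `e` goes back; `c ∘ e = id`.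
  let c (W : {W : Set Y // IsOpen W ∧ IsConnected W ∧ (y : Y) ∈ W}) :
      {W' : Set U // IsOpen W' ∧ IsConnected W' ∧ y ∈ W'} :=
    ⟨Subtype.val ⁻¹' connectedComponentIn (W.1 ∩ U) y,
      (W.2.1.inter hU).connectedComponentIn.preimage continuous_subtype_val,
      (isConnected_connectedComponentIn_iff (F := W.1 ∩ U).mpr ⟨W.2.2.2, y.2⟩).preimage_of_isOpenMap
        Subtype.val_injective hU.isOpenMap_subtype_val (by
          rw [Subtype.range_coe]; exact (connectedComponentIn_subset _ _).trans inter_subset_right),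
      mem_connectedComponentIn ⟨W.2.2.2, y.2⟩⟩
  let e (W' : {W' : Set U // IsOpen W' ∧ IsConnected W' ∧ y ∈ W'}) :
      {W : Set Y // IsOpen W ∧ IsConnected W ∧ (y : Y) ∈ W} :=
    ⟨Subtype.val '' W'.1, hU.isOpenMap_subtype_val _ W'.2.1,
      W'.2.2.1.image _ continuous_subtype_val.continuousOn, mem_image_of_mem _ W'.2.2.2⟩
  have hce : ∀ W', c (e W') = W' := fun W' => Subtype.ext <| by
    change Subtype.val ⁻¹' connectedComponentIn (Subtype.val '' W'.1 ∩ U) y = W'.1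
    rw [inter_eq_left.mpr (Subtype.coe_image_subset U W'.1),
      (W'.2.2.1.image _ continuous_subtype_val.continuousOn).isPreconnected.connectedComponentIn
        (mem_image_of_mem _ W'.2.2.2), preimage_image_eq _ Subtype.val_injective]
  choose z hz hχ'z using fun W => hχ' (c W)
  have hzχ' : ∀ W, z W ∈ χ' (c W) := fun W => hχ'z W ▸ mem_connectedComponentIn (hz W)
  let χ W := connectedComponentIn (p ⁻¹' W.1) (z W : X)
  have hcomp : ∀ W, IsComponentOf (Subtype.val '' χ' (c W)) (p ⁻¹' (Subtype.val '' (c W).1)) :=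
    fun W => (hχ' (c W)).image_val_restrictPreimage
  have hsub : ∀ W, Subtype.val '' χ' (c W) ⊆ χ W := fun W =>
    (hcomp W).isConnected.isPreconnected.subset_connectedComponentIn
      (mem_image_of_mem _ (hzχ' W)) ((hcomp W).subset.trans (preimage_mono
        ((image_preimage_subset _ _).trans ((connectedComponentIn_subset _ _).trans
          inter_subset_left))))
  refine ⟨χ, fun W => ⟨_, (connectedComponentIn_subset (W.1 ∩ U) y (hz W)).1, rfl⟩,
    fun W₁ W₂ h => ?_, fun W' => ⟨e W', ?_⟩⟩
  · have hc : (c W₁).1 ⊆ (c W₂).1 :=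
      preimage_mono (connectedComponentIn_mono _ (inter_subset_inter_left _ h))
    have hz₁ : (z W₁ : X) ∈ χ W₂ := hsub W₂ (mem_image_of_mem _ (hmono _ _ hc (hzχ' W₁)))
    exact (connectedComponentIn_mono _ (preimage_mono h)).trans
      (connectedComponentIn_eq hz₁).symm.subset
  · have h := hcomp (e W')
    have hz' := hzχ' (e W')
    rw [hce] at h hz'
    exact (h.eq_connectedComponentIn (mem_image_of_mem _ hz')).symm

theorem IsCompleteSpread.restrictPreimage (hp : IsCompleteSpread p) (hU : IsOpen U) :
    IsCompleteSpread (U.restrictPreimage p) := by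
  refine ⟨hp.1.restrictPreimage hU, fun y hy χ' hχ' hmono => ?_⟩
  obtain ⟨χ, hχ, hχmono, hχχ'⟩ := exists_monotone_components_of_restrictPreimage hU hχ' hmono
  have hy' : (y : Y) ∈ closure (range p) :=
    map_mem_closure continuous_subtype_val hy (by rintro _ ⟨x, rfl⟩; exact ⟨x, rfl⟩)
  obtain ⟨x, hx⟩ := hp.2 y hy' χ hχ hχmono
  have hxU : p x ∈ U := connectedComponentIn_subset U y ((hχ ⟨connectedComponentIn U y,
    hU.connectedComponentIn, isConnected_connectedComponentIn_iff.mpr y.2,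
    mem_connectedComponentIn y.2⟩).subset (mem_iInter.mp hx _))
  refine ⟨⟨x, hxU⟩, mem_iInter.mpr fun W' => ?_⟩
  obtain ⟨W, hW⟩ := hχχ' W'
  have hxW := mem_iInter.mp hx W
  rw [hW] at hxW
  exact Subtype.val_injective.mem_set_image.mp hxW

end Completeness

theorem IsBranchedCovering.restrictPreimage {X Y : Type*} [TopologicalSpace X]
    [TopologicalSpace Y] [LocallyConnectedSpace Y] {p : X → Y} (hp : IsBranchedCovering p)
    {U : Set Y} (hU : Portly Y U) : IsBranchedCovering (U.restrictPreimage p) := by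
  obtain ⟨hpc, hsurj, hX, hY, hOrdX, hOrdY⟩ := hp
  have hpre := hpc.1.portly_preimage hOrdX hU
  have hOrd := preimage_val_ordBase_subset (p := p) hU.1
  refine ⟨hpc.restrictPreimage hU.1, hsurj.restrictPreimage U, hpre.connectedSpace,
    hU.connectedSpace, ?_, (hOrdY.preimage_val hU.1).mono (isOpen_ordBase _) hOrd⟩
  exact (hOrdX.preimage_val hpre.1).mono ((isOpen_ordBase _).preimage hpc.1.1.restrictPreimage)
    fun x hx => hOrd hx

theorem stmt12_general {X Y : Type*} [TopologicalSpace X] [TopologicalSpace Y]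
    [LocallyPathConnectedSpace Y]
    (p : X → Y) (hp : IsBranchedCovering p) (U : Set Y) (hU : Portly Y U) :
    Portly X (p ⁻¹' U) ∧
    IsBranchedCovering
      (Set.MapsTo.restrict p (p ⁻¹' U) U (Set.mapsTo_preimage p U)) :=
  ⟨hp.1.1.portly_preimage hp.2.2.2.2.1 hU, hp.restrictPreimage hU⟩

theorem stmt12 {X Y : Type*} [TopologicalSpace X] [TopologicalSpace Y]
    [T2Space X] [T2Space Y] [FirstCountableTopology X] [FirstCountableTopology Y]
    [LocallyPathConnectedSpace X] [LocallyPathConnectedSpace Y]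
    (p : X → Y) (hp : IsBranchedCovering p) (U : Set Y) (hU : Portly Y U) :
    Portly X (p ⁻¹' U) ∧
    IsBranchedCovering
      (Set.MapsTo.restrict p (p ⁻¹' U) U (Set.mapsTo_preimage p U)) :=
  stmt12_general p hp U hU
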